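/- Let G be a finite group, H ⊆ G a normal subgroup, and K₁, …, Kₙ ⊆ H subgroups such that {K₁, …, Kₙ} is closed under conjugation by elements of G. Then the transfer system generated by the relations (Kᵢ, H) equals {(M,M) : M ⊆ G} ∪ {(M ∩ K_{i₁} ∩ ⋯ ∩ K_{iₘ}, M) : M ⊆ H, 1 ≤ i₁, …, iₘ ≤ n}. -/

import Mathlib

open Pointwise

/-- Conjugate of a subgroup: `conjS g H = g H g⁻¹`. -/
def conjS {G : Type} [Group G] (g : G) (H : Subgroup G) : Subgroup G :=
  MulAut.conj g • H

/-- A `G`-transfer system: a partial order on the subgroups of `G` refining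
inclusion, closed under conjugation and restriction. -/
structure TransferSystem (G : Type) [Group G] where
  rel : Subgroup G → Subgroup G → Prop
  le_of_rel : ∀ K H : Subgroup G, rel K H → K ≤ H
  refl : ∀ H : Subgroup G, rel H H
  antisymm : ∀ K H : Subgroup G, rel K H → rel H K → K = H
  trans : ∀ J K H : Subgroup G, rel J K → rel K H → rel J H
  conj : ∀ (K H : Subgroup G) (g : G), rel K H → rel (conjS g K) (conjS g H)
  res : ∀ K H L : Subgroup G, rel K H → L ≤ H → rel (K ⊓ L) L

/-- The transfer system generated by a relation `R`, described as a relation: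
`genRel R K H` holds iff every transfer system containing `R` relates `K` to
`H`; i.e. it is the smallest transfer system containing `R`. -/
def genRel {G : Type} [Group G] (R : Subgroup G → Subgroup G → Prop)
    (K H : Subgroup G) : Prop :=
  ∀ T : TransferSystem G, (∀ A B, R A B → T.rel A B) → T.rel K H

lemma mem_conjS {G : Type} [Group G] (g x : G) (K : Subgroup G) :
    x ∈ conjS g K ↔ g⁻¹ * x * g ∈ K := by
  rw [conjS, Subgroup.mem_pointwise_smul_iff_inv_smul_mem]
  simp [mul_assoc]

lemma conjS_inf {G : Type} [Group G] (g : G) (A B : Subgroup G) :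
    conjS g (A ⊓ B) = conjS g A ⊓ conjS g B := by
  ext x; simp [mem_conjS]

lemma conjS_top {G : Type} [Group G] (g : G) : conjS g (⊤ : Subgroup G) = ⊤ := by
  ext x; simp [mem_conjS]

lemma conjS_mono {G : Type} [Group G] (g : G) {A B : Subgroup G} (h : A ≤ B) :
    conjS g A ≤ conjS g B := by
  intro x hx; rw [mem_conjS] at *; exact h hx

lemma conjS_normal {G : Type} [Group G] (g : G) {H : Subgroup G} (hH : H.Normal) :
    conjS g H = H := by
  ext x
  rw [mem_conjS]
  constructor
  · intro h
    have := hH.conj_mem _ h g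
    simpa [mul_assoc] using this
  · intro h
    simpa using hH.conj_mem _ h g⁻¹

lemma conjS_finset_inf {G : Type} [Group G] (g : G) {n : ℕ} (S : Finset (Fin n))
    (Ks : Fin n → Subgroup G) :
    conjS g (S.inf Ks) = S.inf (fun i => conjS g (Ks i)) := by
  induction S using Finset.induction_on with
  | empty => simp [conjS_top]
  | insert _ _ h ih => simp [conjS_inf, ih]

def T0 {G : Type} [Group G] (H : Subgroup G) (hH : H.Normal) (n : ℕ)
    (Ks : Fin n → Subgroup G) (hle : ∀ i, Ks i ≤ H)
    (hconj : ∀ (g : G) (i : Fin n), ∃ j, conjS g (Ks i) = Ks j) :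
    TransferSystem G where
  rel A B := A = B ∨ (B ≤ H ∧ ∃ S : Finset (Fin n), A = B ⊓ S.inf Ks)
  le_of_rel := by
    rintro K B (rfl | ⟨hBH, S, rfl⟩)
    · exact le_rfl
    · exact inf_le_left
  refl _ := Or.inl rfl
  antisymm := by
    rintro K B h1 h2
    rcases h1 with rfl | ⟨hBH, S, rfl⟩
    · rfl
    · rcases h2 with h | ⟨_, S', h⟩
      · exact h.symm
      · exact le_antisymm inf_le_left (h.le.trans inf_le_left)
  trans := by
    rintro J K B (rfl | ⟨hKH, S, rfl⟩) (rfl | ⟨hBH, S', rfl⟩)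
    · exact Or.inl rfl
    · exact Or.inr ⟨hBH, S', rfl⟩
    · exact Or.inr ⟨hKH, S, rfl⟩
    · refine Or.inr ⟨hBH, S' ∪ S, ?_⟩
      rw [Finset.inf_union, inf_assoc]
  conj := by
    rintro K B g (rfl | ⟨hBH, S, rfl⟩)
    · exact Or.inl rfl
    · choose f hf using hconj g
      refine Or.inr ⟨le_trans (conjS_mono g hBH) (le_of_eq (conjS_normal g hH)),
        S.image f, ?_⟩
      rw [conjS_inf, conjS_finset_inf, Finset.inf_image]
      congr 1
      exact Finset.inf_congr rfl (fun i _ => (hf i).symm) |>.symm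
  res := by
    rintro K B L (rfl | ⟨hBH, S, rfl⟩) hLB
    · exact Or.inl (inf_eq_right.mpr hLB)
    · refine Or.inr ⟨le_trans hLB hBH, S, ?_⟩
      rw [inf_right_comm, inf_eq_right.mpr hLB]


lemma T0_key {G : Type} [Group G] {H : Subgroup G} {n : ℕ} {Ks : Fin n → Subgroup G}
    {T : TransferSystem G} (hT : ∀ i, T.rel (Ks i) H) (S : Finset (Fin n))
    {B : Subgroup G} (hB : B ≤ H) : T.rel (B ⊓ S.inf Ks) B := by
  induction S using Finset.induction_on with
  | empty => simpa using T.refl B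
  | @insert i S hi ih =>
    have h2 : T.rel (Ks i ⊓ (B ⊓ S.inf Ks)) (B ⊓ S.inf Ks) :=
      T.res _ _ _ (hT i) (le_trans inf_le_left hB)
    have heq : B ⊓ (insert i S).inf Ks = Ks i ⊓ (B ⊓ S.inf Ks) := by
      rw [Finset.inf_insert, inf_left_comm]
    rw [heq]; exact T.trans _ _ _ h2 ih

/-- Let `H ⊆ G` be normal and `K₁, …, Kₙ ⊆ H` subgroups whose
set is closed under conjugation.  The transfer system generated by the pairs
`(Kᵢ, H)` is
`{(M, M) : M ⊆ G} ∪ {(M ⊓ K_{i₁} ⊓ ⋯ ⊓ K_{iₘ}, M) : M ≤ H, m ≥ 1}`. -/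
theorem stmt10 {G : Type} [Group G] [Finite G] (H : Subgroup G) (hH : H.Normal)
    (n : ℕ) (Ks : Fin n → Subgroup G) (hle : ∀ i, Ks i ≤ H)
    (hconj : ∀ (g : G) (i : Fin n), ∃ j, conjS g (Ks i) = Ks j) :
    ∀ A B : Subgroup G,
      genRel (fun A B => (∃ i, A = Ks i) ∧ B = H) A B ↔
        (A = B ∨ (B ≤ H ∧ ∃ (m : ℕ), 0 < m ∧ ∃ idx : Fin m → Fin n,
          A = B ⊓ ⨅ j, Ks (idx j))) := by
  intro A B
  constructor
  · intro hgen
    have h := hgen (T0 H hH n Ks hle hconj) ?_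
    · rcases h with rfl | ⟨hBH, S, rfl⟩
      · exact Or.inl rfl
      · rcases S.eq_empty_or_nonempty with rfl | hS
        · exact Or.inl (by simp)
        · refine Or.inr ⟨hBH, S.card, Finset.card_pos.mpr hS,
            fun j => (S.equivFin.symm j : Fin n), ?_⟩
          congr 1
          refine le_antisymm (le_iInf fun j => Finset.inf_le (S.equivFin.symm j).2)
            (Finset.le_inf fun i hi => ?_)
          refine iInf_le_of_le (S.equivFin ⟨i, hi⟩) ?_
          simp
    · rintro A' B' ⟨⟨i, rfl⟩, rfl⟩
      exact Or.inr ⟨le_rfl, {i}, by simp [inf_eq_right.mpr (hle i)]⟩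
  · rintro (rfl | ⟨hBH, m, hm, idx, rfl⟩)
    · intro T _; exact T.refl _
    · intro T hTR
      have hT : ∀ i, T.rel (Ks i) H := fun i => hTR _ _ ⟨⟨i, rfl⟩, rfl⟩
      have heq : (Finset.univ.image idx).inf Ks = ⨅ j, Ks (idx j) := by
        rw [Finset.inf_image]
        refine le_antisymm (le_iInf fun j => Finset.inf_le (Finset.mem_univ j))
          (Finset.le_inf fun j _ => iInf_le _ j)
      rw [← heq]
      exact T0_key hT _ hBH
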